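/- In the partial observation model, for an arbitrary but fixed control strategy g of the form U^i_t = g^i_t(Z_{1:t}, Y^i_{1:t}, U_{1:t-1}), the local states of all subsystems are conditionally independent given the history of shared states and control actions: for every t = 1,…,T and every realization (z_{1:t}, u_{1:t}) with P(Z_{1:t}=z_{1:t}, U_{1:t}=u_{1:t}) > 0 and every x_{1:t} = (x^1_{1:t},…,x^n_{1:t}), one has P(X_{1:t}=x_{1:t} | Z_{1:t}=z_{1:t}, U_{1:t}=u_{1:t}) = ∏_{i=1}^n P(X^i_{1:t}=x^i_{1:t} | Z_{1:t}=z_{1:t}, U_{1:t}=u_{1:t}). -/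

import Mathlib

/-!
Pin `Z₁ = z₁`: the sample weight then factors into a weight on the shared noise `W⁰` times, for
each station `i`, a weight on its private randomness `(X₁ⁱ, Wⁱ, W̃ⁱ)` (the law of `X₁ⁱ` depends
on `Z₁` only). On the event `{Z_{1:t} = z, U_{1:t} = u}` every station runs in open loop: its
states, observations and actions are computed from `z`, `u` and its private randomness alone.
So this event is a product event (one condition on `(Z₁, W⁰)`, one per station), and so is its
intersection with `{X_{1:t} = x}`; under a product weight, events in distinct coordinates are
conditionally independent given a product event.
-/

open scoped Classical

namespace ControlSharing

variable {n T : ℕ}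
variable {Z : Type} [Fintype Z] [Nonempty Z]
variable {X : Fin n → Type} [∀ i, Fintype (X i)] [∀ i, Nonempty (X i)]
variable {Y : Fin n → Type} [∀ i, Fintype (Y i)] [∀ i, Nonempty (Y i)]
variable {U : Fin n → Type} [∀ i, Fintype (U i)] [∀ i, Nonempty (U i)]
variable {W0 : Type} [Fintype W0] [Nonempty W0]
variable {W : Fin n → Type} [∀ i, Fintype (W i)] [∀ i, Nonempty (W i)]
variable {WT : Fin n → Type} [∀ i, Fintype (WT i)] [∀ i, Nonempty (WT i)]

/-- A probability weight function on a finite type. -/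
def IsLaw {α : Type} [Fintype α] (P : α → ℝ) : Prop :=
  (∀ a, 0 ≤ P a) ∧ ∑ a, P a = 1

/-- Sample space of primitive random variables for the partial observation model: the initial
shared state `Z₁`, the initial local states `X₁ⁱ`, the shared-dynamics noises `W⁰_t`, the local
plant noises `Wⁱ_t` and the observation noises `W̃ⁱ_t`. -/
abbrev OmegaP (T : ℕ) (Z : Type) (X : Fin n → Type) (W0 : Type) (W WT : Fin n → Type) : Type :=
  Z × (∀ i, X i) × (Fin T → W0) × (∀ i, Fin T → W i) × (∀ i, Fin T → WT i)

/-- The probability weight of a sample point: `Z₁ ~ P_Z`; conditionally on `Z₁` the initial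
local states are independent with `X₁ⁱ ~ P_{Xⁱ|Z}(·|Z₁)`; all plant and observation noises are
independent with laws `P_{W⁰}`, `P_{Wⁱ}`, `P_{W̃ⁱ}`, independent of the initial states. -/
noncomputable def weightP (PZ : Z → ℝ) (PX : ∀ i, Z → X i → ℝ) (PW0 : W0 → ℝ)
    (PW : ∀ i, W i → ℝ) (PWT : ∀ i, WT i → ℝ) (ω : OmegaP T Z X W0 W WT) : ℝ :=
  PZ ω.1 * (∏ i, PX i ω.1 (ω.2.1 i)) * (∏ t, PW0 (ω.2.2.1 t)) *
    (∏ i, ∏ t, PW i (ω.2.2.2.1 i t)) * (∏ i, ∏ t, PWT i (ω.2.2.2.2 i t))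

/-- A control strategy for the partial observation model: station `i` chooses
`Uⁱ_t = gⁱ_t(Z_{1:t}, Yⁱ_{1:t}, U_{1:t-1})`. -/
def StrategyP (Z : Type) (Y U : Fin n → Type) : Type :=
  ∀ (i : Fin n) (t : ℕ), (Fin (t + 1) → Z) → (Fin (t + 1) → Y i) →
    (Fin t → ∀ j, U j) → U i

variable (f0 : ℕ → Z → (∀ j, U j) → W0 → Z)
variable (f : ∀ i, ℕ → Z → X i → (∀ j, U j) → W i → X i)
variable (ℓ : ∀ i, ℕ → X i → WT i → Y i)

/-- The closed-loop trajectory of the partial observation model: histories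
`(Z_{1:t+1}, X_{1:t+1}, Y_{1:t+1}, U_{1:t+1})` generated by
`Z_{t+1} = f⁰_t(Z_t, U_t, W⁰_t)`, `Xⁱ_{t+1} = fⁱ_t(Z_t, Xⁱ_t, U_t, Wⁱ_t)`,
`Yⁱ_t = ℓⁱ_t(Xⁱ_t, W̃ⁱ_t)` and the strategy `g`. -/
noncomputable def trajP (g : StrategyP Z Y U) (ω : OmegaP T Z X W0 W WT) :
    (t : ℕ) → (Fin (t + 1) → Z) × (∀ i, Fin (t + 1) → X i) ×
      (∀ i, Fin (t + 1) → Y i) × (Fin (t + 1) → ∀ j, U j)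
  | 0 =>
    let zh : Fin 1 → Z := fun _ => ω.1
    let xh : ∀ i, Fin 1 → X i := fun i _ => ω.2.1 i
    let yh : ∀ i, Fin 1 → Y i := fun i _ =>
      ℓ i 0 (ω.2.1 i)
        (if h : 0 < T then ω.2.2.2.2 i ⟨0, h⟩ else Classical.arbitrary (WT i))
    ⟨zh, xh, yh, fun _ j => g j 0 zh (yh j) (fun s => s.elim0)⟩
  | t + 1 =>
    let prev := trajP g ω t
    let ucur := prev.2.2.2 (Fin.last t)
    let znew := f0 t (prev.1 (Fin.last t)) ucur
      (if h : t < T then ω.2.2.1 ⟨t, h⟩ else Classical.arbitrary W0)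
    let xnew : ∀ i, X i := fun i =>
      f i t (prev.1 (Fin.last t)) (prev.2.1 i (Fin.last t)) ucur
        (if h : t < T then ω.2.2.2.1 i ⟨t, h⟩ else Classical.arbitrary (W i))
    let ynew : ∀ i, Y i := fun i =>
      ℓ i (t + 1) (xnew i)
        (if h : t + 1 < T then ω.2.2.2.2 i ⟨t + 1, h⟩ else Classical.arbitrary (WT i))
    let zh : Fin (t + 2) → Z := Fin.snoc prev.1 znew
    let xh : ∀ i, Fin (t + 2) → X i := fun i => Fin.snoc (prev.2.1 i) (xnew i)
    let yh : ∀ i, Fin (t + 2) → Y i := fun i => Fin.snoc (prev.2.2.1 i) (ynew i)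
    ⟨zh, xh, yh, Fin.snoc prev.2.2.2 (fun j => g j (t + 1) zh (yh j) prev.2.2.2)⟩

/-- The shared state process `Z_t`. -/
noncomputable def ZpP (g : StrategyP Z Y U) (t : ℕ) (ω : OmegaP T Z X W0 W WT) : Z :=
  (trajP f0 f ℓ g ω t).1 (Fin.last t)

/-- The local state process `Xⁱ_t`. -/
noncomputable def XpP (g : StrategyP Z Y U) (i : Fin n) (t : ℕ) (ω : OmegaP T Z X W0 W WT) :
    X i :=
  (trajP f0 f ℓ g ω t).2.1 i (Fin.last t)

/-- The observation process `Yⁱ_t`. -/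
noncomputable def YpP (g : StrategyP Z Y U) (i : Fin n) (t : ℕ) (ω : OmegaP T Z X W0 W WT) :
    Y i :=
  (trajP f0 f ℓ g ω t).2.2.1 i (Fin.last t)

/-- The action process `Uⁱ_t`. -/
noncomputable def UpP (g : StrategyP Z Y U) (i : Fin n) (t : ℕ) (ω : OmegaP T Z X W0 W WT) :
    U i :=
  (trajP f0 f ℓ g ω t).2.2.2 (Fin.last t) i

/-- Probability of an event under a weight function. -/
noncomputable def Pr {Ω : Type} [Fintype Ω] (μ : Ω → ℝ) (A : Ω → Prop) : ℝ :=
  ∑ ω : Ω, if A ω then μ ω else 0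

/-- Conditional probability `P(A | B)`. -/
noncomputable def CondPr {Ω : Type} [Fintype Ω] (μ : Ω → ℝ) (A B : Ω → Prop) : ℝ :=
  Pr μ (fun ω => A ω ∧ B ω) / Pr μ B

/-- Conditional expectation `E[h | B]`. -/
noncomputable def CondExp {Ω : Type} [Fintype Ω] (μ : Ω → ℝ) (h : Ω → ℝ) (B : Ω → Prop) : ℝ :=
  (∑ ω : Ω, if B ω then μ ω * h ω else 0) / Pr μ B

/-- The expected total cost `J(g) = E[∑_{t=1}^T c_t(Z_t, X_t, U_t)]`. -/
noncomputable def JP (c : ℕ → Z → (∀ i, X i) → (∀ i, U i) → ℝ)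
    (μ : OmegaP T Z X W0 W WT → ℝ) (g : StrategyP Z Y U) : ℝ :=
  ∑ ω : OmegaP T Z X W0 W WT, μ ω *
    ∑ t ∈ Finset.range T,
      c t (ZpP f0 f ℓ g t ω) (fun i => XpP f0 f ℓ g i t ω) (fun i => UpP f0 f ℓ g i t ω)

/-- The posterior belief `Ξⁱ_t` of control station `i` on its local state `Xⁱ_t` given all of
its information `(Yⁱ_{1:t}, Z_{1:t}, U_{1:t-1})`, realized at the sample point `ω`. -/
noncomputable def XiBelief (μ : OmegaP T Z X W0 W WT → ℝ) (g : StrategyP Z Y U) (i : Fin n)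
    (t : ℕ) (ω : OmegaP T Z X W0 W WT) : X i → ℝ := fun x =>
  CondPr μ (fun ω' => XpP f0 f ℓ g i t ω' = x)
    (fun ω' => (∀ s ≤ t, YpP f0 f ℓ g i s ω' = YpP f0 f ℓ g i s ω) ∧
      (∀ s ≤ t, ZpP f0 f ℓ g s ω' = ZpP f0 f ℓ g s ω) ∧
      (∀ s < t, ∀ j, UpP f0 f ℓ g j s ω' = UpP f0 f ℓ g j s ω))

set_option linter.unusedSectionVars false

section FiniteProbability

variable {Ω α β : Type} [Fintype Ω] [Fintype α] [Fintype β]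

lemma Pr_congr (μ : Ω → ℝ) {A B : Ω → Prop} (h : ∀ ω, A ω ↔ B ω) : Pr μ A = Pr μ B := by
  simp only [Pr, h]

lemma condPr_congr (μ : Ω → ℝ) {A A' B B' : Ω → Prop} (hB : ∀ ω, B ω ↔ B' ω)
    (hA : ∀ ω, B ω → (A ω ↔ A' ω)) : CondPr μ A B = CondPr μ A' B' := by
  unfold CondPr
  rw [Pr_congr μ hB, Pr_congr μ fun ω => and_congr_left (hA ω)]
  simp only [hB]

lemma Pr_comp_equiv (μ : Ω → ℝ) (A : Ω → Prop) (e : α ≃ Ω) :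
    Pr μ A = Pr (fun a => μ (e a)) (fun a => A (e a)) :=
  (Fintype.sum_equiv e _ _ fun _ => rfl).symm

lemma Pr_prod_fst_eq (μ : α × β → ℝ) (a : α) (B : β → Prop) :
    Pr μ (fun p => p.1 = a ∧ B p.2) = Pr (fun b => μ (a, b)) B := by
  simp only [Pr, Fintype.sum_prod_type]
  rw [Finset.sum_eq_single a (fun a' _ ha' => by simp [ha']) (by simp)]
  simp

lemma Pr_prod_mul (μ : α → ℝ) (ν : β → ℝ) (A : α → Prop) (B : β → Prop) :
    Pr (fun p : α × β => μ p.1 * ν p.2) (fun p => A p.1 ∧ B p.2) = Pr μ A * Pr ν B := by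
  simp only [Pr, Fintype.sum_prod_type, Finset.sum_mul_sum, ite_and, ite_zero_mul_ite_zero]

lemma Pr_pi_prod {ι : Type} [Fintype ι] [DecidableEq ι] {β : ι → Type} [∀ i, Fintype (β i)]
    (μ : ∀ i, β i → ℝ) (A : ∀ i, β i → Prop) :
    Pr (fun b : ∀ i, β i => ∏ i, μ i (b i)) (fun b => ∀ i, A i (b i)) =
      ∏ i, Pr (μ i) (A i) := by
  simp only [Pr, Fintype.prod_sum, Fintype.prod_ite_zero]

lemma prod_div_prod_eq_prod_update_div {ι K : Type} [Fintype ι] [DecidableEq ι] [Field K]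
    (p q : ι → K) :
    (∏ i, q i) / ∏ i, p i = ∏ i, (∏ j, Function.update p i (q i) j) / ∏ j, p j := by
  by_cases hp : ∏ i, p i = 0
  · -- both sides are `0`: `x / 0 = 0`, and the factor at a `k` with `p k = 0` divides by `0`
    obtain ⟨k, -, -⟩ := Finset.prod_eq_zero_iff.mp hp
    rw [hp, div_zero]
    exact (Finset.prod_eq_zero (Finset.mem_univ k) (div_zero _)).symm
  · have hupdate : ∀ i, ∏ j, Function.update p i (q i) j = q i / p i * ∏ j, p j := fun i => by
      have hpi : p i ≠ 0 := fun h => hp (Finset.prod_eq_zero (Finset.mem_univ i) h)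
      rw [Finset.prod_update_of_mem (Finset.mem_univ i),
        Finset.prod_eq_mul_prod_sdiff_singleton_of_mem (Finset.mem_univ i) p]
      field_simp
    simp only [hupdate, mul_div_cancel_right₀ _ hp, Finset.prod_div_distrib]

lemma condPr_pi_forall {ι : Type} [Fintype ι] [DecidableEq ι] {β : ι → Type}
    [∀ i, Fintype (β i)] (μ : ∀ i, β i → ℝ) (A C : ∀ i, β i → Prop) :
    CondPr (fun b : ∀ i, β i => ∏ i, μ i (b i)) (fun b => ∀ i, C i (b i))
        (fun b => ∀ i, A i (b i)) =
      ∏ i, CondPr (fun b : ∀ i, β i => ∏ i, μ i (b i)) (fun b => C i (b i))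
        (fun b => ∀ j, A j (b j)) := by
  have hmarginal : ∀ i, Pr (fun b : ∀ i, β i => ∏ i, μ i (b i))
      (fun b => C i (b i) ∧ ∀ j, A j (b j)) =
        ∏ j, Function.update (fun j => Pr (μ j) (A j)) i
          (Pr (μ i) fun y => C i y ∧ A i y) j := fun i => by
    have hevent : ∀ b : ∀ i, β i, (C i (b i) ∧ ∀ j, A j (b j)) ↔
        ∀ j, Function.update A i (fun y => C i y ∧ A i y) j (b j) := fun b => by
      rw [Function.forall_update_iff A fun j (P : β j → Prop) => P (b j)]
      exact ⟨fun ⟨hc, ha⟩ => ⟨⟨hc, ha i⟩, fun j _ => ha j⟩,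
        fun ⟨⟨hc, hai⟩, ha⟩ => ⟨hc, fun j => if hj : j = i then hj ▸ hai else ha j hj⟩⟩
    rw [Pr_congr _ hevent, Pr_pi_prod]
    exact Finset.prod_congr rfl fun j _ => Function.apply_update (fun j => Pr (μ j)) A i _ j
  simp only [CondPr, hmarginal, Pr_pi_prod]
  rw [Pr_congr _ fun b => forall_and.symm, Pr_pi_prod μ fun i y => C i y ∧ A i y]
  exact prod_div_prod_eq_prod_update_div _ _

end FiniteProbability

abbrev LocalSample (T : ℕ) (X W WT : Fin n → Type) (i : Fin n) : Type :=
  X i × (Fin T → W i) × (Fin T → WT i)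

def localPart (ω : OmegaP T Z X W0 W WT) (i : Fin n) : LocalSample T X W WT i :=
  (ω.2.1 i, ω.2.2.2.1 i, ω.2.2.2.2 i)

def localWeight (PX : ∀ i, Z → X i → ℝ) (PW : ∀ i, W i → ℝ) (PWT : ∀ i, WT i → ℝ) (z₁ : Z)
    (i : Fin n) (l : LocalSample T X W WT i) : ℝ :=
  PX i z₁ l.1 * (∏ r, PW i (l.2.1 r)) * ∏ r, PWT i (l.2.2 r)

def sampleEquiv :
    Z × (Fin T → W0) × (∀ i, LocalSample T X W WT i) ≃ OmegaP T Z X W0 W WT where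
  toFun p := (p.1, fun i => (p.2.2 i).1, p.2.1, fun i => (p.2.2 i).2.1, fun i => (p.2.2 i).2.2)
  invFun ω := (ω.1, ω.2.2.1, localPart ω)
  left_inv _ := rfl
  right_inv _ := rfl

lemma weightP_sampleEquiv (PZ : Z → ℝ) (PX : ∀ i, Z → X i → ℝ) (PW0 : W0 → ℝ)
    (PW : ∀ i, W i → ℝ) (PWT : ∀ i, WT i → ℝ) (z₁ : Z)
    (q : (Fin T → W0) × ∀ i, LocalSample T X W WT i) :
    weightP PZ PX PW0 PW PWT (sampleEquiv (z₁, q)) =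
      (PZ z₁ * ∏ r, PW0 (q.1 r)) * ∏ i, localWeight PX PW PWT z₁ i (q.2 i) := by
  change weightP PZ PX PW0 PW PWT
    (z₁, fun i => (q.2 i).1, q.1, fun i => (q.2 i).2.1, fun i => (q.2 i).2.2) = _
  simp only [weightP, localWeight, Finset.prod_mul_distrib]
  ring

lemma Pr_weightP_local (PZ : Z → ℝ) (PX : ∀ i, Z → X i → ℝ) (PW0 : W0 → ℝ)
    (PW : ∀ i, W i → ℝ) (PWT : ∀ i, WT i → ℝ) (z₁ : Z) (B : (Fin T → W0) → Prop)
    (R : (∀ i, LocalSample T X W WT i) → Prop) :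
    Pr (weightP PZ PX PW0 PW PWT) (fun ω => ω.1 = z₁ ∧ B ω.2.2.1 ∧ R (localPart ω)) =
      Pr (fun w0 : Fin T → W0 => PZ z₁ * ∏ r, PW0 (w0 r)) B *
        Pr (fun l => ∏ i, localWeight PX PW PWT z₁ i (l i)) R := by
  calc _ = Pr (fun p => weightP PZ PX PW0 PW PWT (sampleEquiv p))
          (fun p => p.1 = z₁ ∧ B p.2.1 ∧ R p.2.2) := Pr_comp_equiv _ _ sampleEquiv
    _ = Pr (fun q => weightP PZ PX PW0 PW PWT (sampleEquiv (z₁, q)))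
          (fun q => B q.1 ∧ R q.2) :=
      Pr_prod_fst_eq _ z₁ fun q : (Fin T → W0) × _ => B q.1 ∧ R q.2
    _ = _ := by
      simp only [weightP_sampleEquiv]
      exact Pr_prod_mul (fun w0 => PZ z₁ * ∏ r, PW0 (w0 r))
        (fun l => ∏ i, localWeight PX PW PWT z₁ i (l i)) B R

lemma condPr_weightP_local (PZ : Z → ℝ) (PX : ∀ i, Z → X i → ℝ) (PW0 : W0 → ℝ)
    (PW : ∀ i, W i → ℝ) (PWT : ∀ i, WT i → ℝ) (z₁ : Z) (B : (Fin T → W0) → Prop)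
    (hB : Pr (fun w0 : Fin T → W0 => PZ z₁ * ∏ r, PW0 (w0 r)) B ≠ 0)
    (C R : (∀ i, LocalSample T X W WT i) → Prop) :
    CondPr (weightP PZ PX PW0 PW PWT) (fun ω => C (localPart ω))
        (fun ω => ω.1 = z₁ ∧ B ω.2.2.1 ∧ R (localPart ω)) =
      CondPr (fun l => ∏ i, localWeight PX PW PWT z₁ i (l i)) C R := by
  unfold CondPr
  beta_reduce
  rw [Pr_congr _ fun ω => and_left_comm.trans (and_congr_right fun _ => and_left_comm),
    Pr_weightP_local, Pr_weightP_local _ _ _ _ _ _ _ fun l => C l ∧ R l,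
    mul_div_mul_left _ _ hB]

lemma apply_eq_apply_last_of_castSucc {α : Type} (h : ∀ s, Fin (s + 1) → α)
    (hh : ∀ s (k : Fin (s + 1)), h (s + 1) k.castSucc = h s k) (s : ℕ) (k : Fin (s + 1)) :
    h s k = h k (Fin.last k) := by
  induction s with
  | zero => rw [Fin.fin_one_eq_zero k]; rfl
  | succ s ih =>
    refine Fin.lastCases rfl (fun k => ?_) k
    rw [hh, ih]
    rfl

noncomputable def noiseAt {α : Type} [Nonempty α] (w : Fin T → α) (s : ℕ) : α :=
  if h : s < T then w ⟨s, h⟩ else Classical.arbitrary α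

section ClosedLoop

variable (g : StrategyP Z Y U) (ω : OmegaP T Z X W0 W WT)

lemma trajP_fst_apply (s : ℕ) (k : Fin (s + 1)) :
    (trajP f0 f ℓ g ω s).1 k = ZpP f0 f ℓ g k ω :=
  apply_eq_apply_last_of_castSucc (fun s => (trajP f0 f ℓ g ω s).1)
    (fun s k => by simp only [trajP, Fin.snoc_castSucc]) s k

lemma trajP_obs_apply (i : Fin n) (s : ℕ) (k : Fin (s + 1)) :
    (trajP f0 f ℓ g ω s).2.2.1 i k = YpP f0 f ℓ g i k ω :=
  apply_eq_apply_last_of_castSucc (fun s => (trajP f0 f ℓ g ω s).2.2.1 i)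
    (fun s k => by simp only [trajP, Fin.snoc_castSucc]) s k

lemma trajP_action_apply (s : ℕ) (k : Fin (s + 1)) :
    (trajP f0 f ℓ g ω s).2.2.2 k = fun j => UpP f0 f ℓ g j k ω :=
  apply_eq_apply_last_of_castSucc (fun s => (trajP f0 f ℓ g ω s).2.2.2)
    (fun s k => by simp only [trajP, Fin.snoc_castSucc]) s k

lemma ZpP_succ (s : ℕ) :
    ZpP f0 f ℓ g (s + 1) ω =
      f0 s (ZpP f0 f ℓ g s ω) (fun j => UpP f0 f ℓ g j s ω) (noiseAt ω.2.2.1 s) := by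
  simp only [ZpP, trajP, Fin.snoc_last]
  rfl

lemma XpP_succ (i : Fin n) (s : ℕ) :
    XpP f0 f ℓ g i (s + 1) ω =
      f i s (ZpP f0 f ℓ g s ω) (XpP f0 f ℓ g i s ω) (fun j => UpP f0 f ℓ g j s ω)
        (noiseAt (ω.2.2.2.1 i) s) := by
  simp only [XpP, trajP, Fin.snoc_last]
  rfl

lemma YpP_eq (i : Fin n) (s : ℕ) :
    YpP f0 f ℓ g i s ω = ℓ i s (XpP f0 f ℓ g i s ω) (noiseAt (ω.2.2.2.2 i) s) := by
  cases s with
  | zero => rfl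
  | succ s =>
    simp only [YpP, XpP, trajP, Fin.snoc_last]
    rfl

lemma UpP_eq_strategy (i : Fin n) (s : ℕ) :
    UpP f0 f ℓ g i s ω =
      g i s (fun k => ZpP f0 f ℓ g k ω) (fun k => YpP f0 f ℓ g i k ω)
        (fun k j => UpP f0 f ℓ g j k ω) := by
  rw [← funext (trajP_fst_apply f0 f ℓ g ω s), ← funext (trajP_obs_apply f0 f ℓ g ω i s)]
  cases s with
  | zero => exact congrArg (g i 0 _ _) (Subsingleton.elim (α := Fin 0 → ∀ j, U j) _ _)
  | succ s =>
    rw [← funext (trajP_action_apply f0 f ℓ g ω s)]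
    simp only [UpP, trajP, Fin.snoc_last]

end ClosedLoop

noncomputable def openLoopX (z : ℕ → Z) (u : ℕ → ∀ j, U j) (i : Fin n)
    (l : LocalSample T X W WT i) : ℕ → X i
  | 0 => l.1
  | s + 1 => f i s (z s) (openLoopX z u i l s) (u s) (noiseAt l.2.1 s)

noncomputable def openLoopY (z : ℕ → Z) (u : ℕ → ∀ j, U j) (i : Fin n)
    (l : LocalSample T X W WT i) (s : ℕ) : Y i :=
  ℓ i s (openLoopX f z u i l s) (noiseAt l.2.2 s)

noncomputable def openLoopU (g : StrategyP Z Y U) (z : ℕ → Z) (u : ℕ → ∀ j, U j) (i : Fin n)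
    (l : LocalSample T X W WT i) (s : ℕ) : U i :=
  g i s (fun k => z k) (fun k => openLoopY f ℓ z u i l k) (fun k => u k)

section OpenLoop

variable (g : StrategyP Z Y U) (ω : OmegaP T Z X W0 W WT) (z : ℕ → Z) (u : ℕ → ∀ j, U j)

lemma XpP_eq_openLoopX (i : Fin n) (s : ℕ) (hZ : ∀ r < s, ZpP f0 f ℓ g r ω = z r)
    (hU : ∀ r < s, ∀ j, UpP f0 f ℓ g j r ω = u r j) :
    XpP f0 f ℓ g i s ω = openLoopX f z u i (localPart ω i) s := by
  induction s with
  | zero => rfl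
  | succ s ih =>
    rw [XpP_succ, ih (fun r hr => hZ r (Nat.lt_succ_of_lt hr))
      (fun r hr => hU r (Nat.lt_succ_of_lt hr)), hZ s s.lt_succ_self,
      funext (hU s s.lt_succ_self)]
    rfl

lemma YpP_eq_openLoopY (i : Fin n) (s : ℕ) (hZ : ∀ r < s, ZpP f0 f ℓ g r ω = z r)
    (hU : ∀ r < s, ∀ j, UpP f0 f ℓ g j r ω = u r j) :
    YpP f0 f ℓ g i s ω = openLoopY f ℓ z u i (localPart ω i) s := by
  rw [YpP_eq, XpP_eq_openLoopX f0 f ℓ g ω z u i s hZ hU]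
  rfl

lemma UpP_eq_openLoopU (i : Fin n) (s : ℕ) (hZ : ∀ r ≤ s, ZpP f0 f ℓ g r ω = z r)
    (hU : ∀ r < s, ∀ j, UpP f0 f ℓ g j r ω = u r j) :
    UpP f0 f ℓ g i s ω = openLoopU f ℓ g z u i (localPart ω i) s := by
  have hZk : (fun k : Fin (s + 1) => ZpP f0 f ℓ g k ω) = fun k : Fin (s + 1) => z k :=
    funext fun k => hZ k k.is_le
  have hYk : (fun k : Fin (s + 1) => YpP f0 f ℓ g i k ω) =
      fun k : Fin (s + 1) => openLoopY f ℓ z u i (localPart ω i) k :=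
    funext fun k => YpP_eq_openLoopY f0 f ℓ g ω z u i k
      (fun r hr => hZ r (hr.le.trans k.is_le)) (fun r hr => hU r (hr.trans_le k.is_le))
  have hUk : (fun (k : Fin s) j => UpP f0 f ℓ g j k ω) = fun k : Fin s => u k :=
    funext fun k => funext (hU k k.isLt)
  rw [UpP_eq_strategy, hZk, hYk, hUk]
  rfl

lemma ZpP_UpP_eq_of_openLoop (t : ℕ) (h₁ : ω.1 = z 0)
    (hshared : ∀ s < t, f0 s (z s) (u s) (noiseAt ω.2.2.1 s) = z (s + 1))
    (hlocal : ∀ i, ∀ s ≤ t, openLoopU f ℓ g z u i (localPart ω i) s = u s i) (s : ℕ)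
    (hs : s ≤ t) : ZpP f0 f ℓ g s ω = z s ∧ ∀ j, UpP f0 f ℓ g j s ω = u s j := by
  induction s using Nat.strong_induction_on with
  | _ s ih =>
    have hZs : ZpP f0 f ℓ g s ω = z s := by
      cases s with
      | zero => exact h₁
      | succ s =>
        obtain ⟨hZ, hU⟩ := ih s s.lt_succ_self (by omega)
        rw [ZpP_succ, hZ, funext hU]
        exact hshared s hs
    have hZ : ∀ r ≤ s, ZpP f0 f ℓ g r ω = z r := fun r hr =>
      hr.lt_or_eq.elim (fun hr => (ih r hr (by omega)).1) fun hr => hr ▸ hZs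
    exact ⟨hZs, fun j => (UpP_eq_openLoopU f0 f ℓ g ω z u j s hZ
      fun r hr => (ih r hr (by omega)).2).trans (hlocal j s hs)⟩

lemma conditioning_event_iff (t : ℕ) :
    ((∀ s ≤ t, ZpP f0 f ℓ g s ω = z s) ∧ (∀ s ≤ t, ∀ j, UpP f0 f ℓ g j s ω = u s j)) ↔
      ω.1 = z 0 ∧ (∀ s < t, f0 s (z s) (u s) (noiseAt ω.2.2.1 s) = z (s + 1)) ∧
        ∀ i, ∀ s ≤ t, openLoopU f ℓ g z u i (localPart ω i) s = u s i := by
  constructor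
  · rintro ⟨hZ, hU⟩
    refine ⟨hZ 0 t.zero_le, fun s hs => ?_, fun i s hs => ?_⟩
    · rw [← hZ s hs.le, ← funext (hU s hs.le), ← ZpP_succ f0 f ℓ g ω s]
      exact hZ (s + 1) hs
    · rw [← UpP_eq_openLoopU f0 f ℓ g ω z u i s (fun r hr => hZ r (hr.trans hs))
        fun r hr => hU r (hr.le.trans hs)]
      exact hU s hs i
  · rintro ⟨h₁, hshared, hlocal⟩
    have h := ZpP_UpP_eq_of_openLoop f0 f ℓ g ω z u t h₁ hshared hlocal
    exact ⟨fun s hs => (h s hs).1, fun s hs => (h s hs).2⟩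

end OpenLoop

theorem partial_obs_conditional_independence
    (PZ : Z → ℝ) (PX : ∀ i, Z → X i → ℝ) (PW0 : W0 → ℝ)
    (PW : ∀ i, W i → ℝ) (PWT : ∀ i, WT i → ℝ)
    (g : StrategyP Z Y U)
    (t : ℕ) (z : ℕ → Z) (u : ℕ → ∀ j, U j)
    (hpos : 0 < Pr (weightP (T := T) PZ PX PW0 PW PWT)
      (fun ω => (∀ s ≤ t, ZpP f0 f ℓ g s ω = z s) ∧
        (∀ s ≤ t, ∀ j, UpP f0 f ℓ g j s ω = u s j)))
    (x : ∀ i, ℕ → X i) :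
    CondPr (weightP (T := T) PZ PX PW0 PW PWT)
        (fun ω => ∀ i, ∀ s ≤ t, XpP f0 f ℓ g i s ω = x i s)
        (fun ω => (∀ s ≤ t, ZpP f0 f ℓ g s ω = z s) ∧
          (∀ s ≤ t, ∀ j, UpP f0 f ℓ g j s ω = u s j)) =
      ∏ i, CondPr (weightP (T := T) PZ PX PW0 PW PWT)
        (fun ω => ∀ s ≤ t, XpP f0 f ℓ g i s ω = x i s)
        (fun ω => (∀ s ≤ t, ZpP f0 f ℓ g s ω = z s) ∧
          (∀ s ≤ t, ∀ j, UpP f0 f ℓ g j s ω = u s j)) := by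
  let B : (Fin T → W0) → Prop := fun w0 => ∀ s < t, f0 s (z s) (u s) (noiseAt w0 s) = z (s + 1)
  let A : ∀ i, LocalSample T X W WT i → Prop := fun i l =>
    ∀ s ≤ t, openLoopU f ℓ g z u i l s = u s i
  let C : ∀ i, LocalSample T X W WT i → Prop := fun i l =>
    ∀ s ≤ t, openLoopX f z u i l s = x i s
  have hevent : ∀ ω : OmegaP T Z X W0 W WT, _ := fun ω =>
    conditioning_event_iff f0 f ℓ g ω z u t
  have hstate : ∀ ω, ((∀ s ≤ t, ZpP f0 f ℓ g s ω = z s) ∧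
      (∀ s ≤ t, ∀ j, UpP f0 f ℓ g j s ω = u s j)) →
      ∀ i, (∀ s ≤ t, XpP f0 f ℓ g i s ω = x i s) ↔ C i (localPart ω i) :=
    fun ω ⟨hZ, hU⟩ i => forall₂_congr fun s hs => by
      rw [XpP_eq_openLoopX f0 f ℓ g ω z u i s (fun r hr => hZ r (hr.le.trans hs))
        fun r hr => hU r (hr.le.trans hs)]
  have hB : Pr (fun w0 : Fin T → W0 => PZ (z 0) * ∏ r, PW0 (w0 r)) B ≠ 0 := by
    rw [Pr_congr _ hevent, Pr_weightP_local PZ PX PW0 PW PWT (z 0) B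
      fun l => ∀ i, A i (l i)] at hpos
    exact left_ne_zero_of_mul hpos.ne'
  rw [condPr_congr _ hevent fun ω hω => forall_congr' (hstate ω hω),
    condPr_weightP_local PZ PX PW0 PW PWT (z 0) B hB (fun l => ∀ i, C i (l i))
      fun l => ∀ i, A i (l i), condPr_pi_forall]
  refine Finset.prod_congr rfl fun i _ => ?_
  rw [condPr_congr _ hevent fun ω hω => hstate ω hω i]
  exact (condPr_weightP_local PZ PX PW0 PW PWT (z 0) B hB (fun l => C i (l i))
    fun l => ∀ j, A j (l j)).symm


end ControlSharing
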